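/- Fix a column index set n, a finite set of views i ∈ {1,…,V}, and a finite set of labels k ∈ {1,…,c}. For each view i, let E_i be a real matrix with row index set m_i and column index set n. For each label k and view i, let f_{k,i} : r_{k,i} → m_i be a row-selection map and let E_{k,i} = (E_i).submatrix f_{k,i} id be the corresponding sub-matrix of selected rows of E_i. Assume that for every view i, each row index of m_i lies in the image of f_{k,i} for some label k (i.e., the vertical concatenation of E_{1,i}, …, E_{c,i} contains all rows of E_i). Then ∑_{k=1}^{c} ‖[E_{k,1}; E_{k,2}; …; E_{k,V}]‖_* ≥ ‖[E_1; E_2; …; E_V]‖_*, where [·;·;…;·] denotes vertical concatenation over the views. -/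

import Mathlib

open Matrix

/-- The trace norm (nuclear norm) of a real matrix `A`: the trace of the
positive semidefinite square root of `Aᵀ * A`. -/
noncomputable def traceNorm {m n : Type*} [Fintype m] [Fintype n] [DecidableEq n]
    (A : Matrix m n ℝ) : ℝ :=
  ((((Matrix.posSemidef_conjTranspose_mul_self A).1.eigenvectorUnitary : Matrix n n ℝ) *
      diagonal (RCLike.ofReal ∘ fun i =>
        Real.sqrt ((Matrix.posSemidef_conjTranspose_mul_self A).1.eigenvalues i)) *
      (star (Matrix.posSemidef_conjTranspose_mul_self A).1.eigenvectorUnitary : Matrix n n ℝ))).trace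
/-- Vertical concatenation of a finite family of matrices with a common column
index set, indexed over the sigma type of their row index sets. -/
def vconcat {ι : Type*} {m : ι → Type*} {n : Type*}
    (A : ∀ i, Matrix (m i) n ℝ) : Matrix (Σ i, m i) n ℝ :=
  Matrix.of fun p c => A p.1 p.2 c

/-! ### Auxiliary lemmas -/

/-- Trace of `Xᴴ * Y` as an explicit double sum. -/
lemma trace_conjTranspose_mul {p n : Type*} [Fintype p] [Fintype n]
    (X Y : Matrix p n ℝ) : (Xᴴ * Y).trace = ∑ c, ∑ ρ, X ρ c * Y ρ c := by
  simp [Matrix.trace, Matrix.diag, Matrix.mul_apply, Matrix.conjTranspose_apply]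

/-- The trace norm is the sum of the square roots of the eigenvalues of the Gram matrix. -/
lemma traceNorm_eq_sum_sqrt {p n : Type*} [Fintype p] [Fintype n] [DecidableEq n]
    (A : Matrix p n ℝ) :
    traceNorm A = ∑ j, Real.sqrt ((Matrix.posSemidef_conjTranspose_mul_self A).1.eigenvalues j) := by
  rw [traceNorm, Matrix.trace_mul_cycle]
  rw [show (star ((Matrix.posSemidef_conjTranspose_mul_self A).1.eigenvectorUnitary : Matrix n n ℝ)) *
      ((Matrix.posSemidef_conjTranspose_mul_self A).1.eigenvectorUnitary : Matrix n n ℝ) = 1 from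
    Matrix.mem_unitaryGroup_iff'.mp ((Matrix.posSemidef_conjTranspose_mul_self A).1.eigenvectorUnitary).2]
  simp [Matrix.trace_diagonal]

lemma sandwich {n : Type*} [Fintype n] [DecidableEq n] (Q : Matrix n n ℝ)
    (hQ1 : Qᴴ * Q = 1) (a b : n → ℝ) :
    (Q * Matrix.diagonal a * Qᴴ) * (Q * Matrix.diagonal b * Qᴴ)
      = Q * Matrix.diagonal (fun j => a j * b j) * Qᴴ := by
  simp only [Matrix.mul_assoc]
  rw [← Matrix.mul_assoc Qᴴ Q, hQ1, Matrix.one_mul,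
    ← Matrix.mul_assoc (Matrix.diagonal a) (Matrix.diagonal b), Matrix.diagonal_mul_diagonal]

lemma quad_diag {n : Type*} [Fintype n] [DecidableEq n]
    (Q : Matrix n n ℝ) (e : n → ℝ) (x : n → ℝ) :
    ∑ c, ∑ c', (Q * Matrix.diagonal e * Qᴴ) c c' * (x c * x c')
      = ∑ j, e j * (∑ c, Q c j * x c) ^ 2 := by
  have entry : ∀ c c', (Q * Matrix.diagonal e * Qᴴ) c c' = ∑ j, Q c j * e j * Q c' j := by
    intro c c'
    simp [Matrix.mul_apply, Matrix.diagonal_apply, Matrix.conjTranspose_apply,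
      mul_ite, mul_zero, ite_mul, zero_mul, Finset.sum_ite_eq', mul_comm, mul_assoc, mul_left_comm]
  simp only [entry, sq, Finset.sum_mul, Finset.mul_sum]
  have swap : ∀ c : n, (∑ c', ∑ j, Q c j * e j * Q c' j * (x c * x c'))
      = ∑ j, ∑ c', Q c j * e j * Q c' j * (x c * x c') := fun c => Finset.sum_comm
  simp only [swap]
  rw [Finset.sum_comm]
  refine Finset.sum_congr rfl fun j _ => Finset.sum_congr rfl fun c _ => ?_
  exact Finset.sum_congr rfl fun c' _ => by ring

lemma sum_sq_rows {p n : Type*} [Fintype p] [Fintype n]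
    (U : Matrix p n ℝ) (x : n → ℝ) :
    ∑ ρ, (∑ c, U ρ c * x c) ^ 2 = ∑ c, ∑ c', (Uᴴ * U) c c' * (x c * x c') := by
  have entry : ∀ c c', (Uᴴ * U) c c' = ∑ ρ, U ρ c * U ρ c' := by
    intro c c'
    simp [Matrix.mul_apply, Matrix.conjTranspose_apply]
  simp only [entry, sq, Finset.sum_mul, Finset.mul_sum]
  have swap : ∀ c : n, (∑ c' : n, ∑ ρ : p, U ρ c * U ρ c' * (x c * x c'))
      = ∑ ρ : p, ∑ c' : n, U ρ c * U ρ c' * (x c * x c') := fun c => Finset.sum_comm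
  simp only [swap]
  rw [Finset.sum_comm]
  exact Finset.sum_congr rfl fun a _ => Finset.sum_congr rfl fun b _ =>
    Finset.sum_congr rfl fun c _ => by ring

/-- Dual bound: if `U` is a contraction then `trace (Aᴴ U) ≤ ‖A‖_*`. -/
lemma trace_mul_le_traceNorm {p n : Type*} [Fintype p] [Fintype n] [DecidableEq n]
    (A U : Matrix p n ℝ)
    (hU : ∀ x : n → ℝ, ∑ ρ, (∑ c, U ρ c * x c) ^ 2 ≤ ∑ c, x c ^ 2) :
    (Aᴴ * U).trace ≤ traceNorm A := by
  set hG := Matrix.posSemidef_conjTranspose_mul_self A with hGdef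
  set h : (Aᴴ * A).IsHermitian := hG.1 with hdef
  set Q : Matrix n n ℝ := (h.eigenvectorUnitary : Matrix n n ℝ) with hQdef
  have hQ2 : Q * star Q = 1 := Matrix.mem_unitaryGroup_iff.mp h.eigenvectorUnitary.2
  have hdiag : star Q * (Aᴴ * A) * Q = Matrix.diagonal h.eigenvalues := by
    have := h.conjStarAlgAut_star_eigenvectorUnitary
    rw [Unitary.conjStarAlgAut_apply] at this
    have e : (RCLike.ofReal ∘ h.eigenvalues : n → ℝ) = h.eigenvalues := by ext; simp
    rw [e, Unitary.coe_star, star_star] at this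
    exact this
  have hQQH : Q * Qᴴ = 1 := by simpa [Matrix.star_eq_conjTranspose] using hQ2
  have step1 : (Aᴴ * U).trace = ((A * Q)ᴴ * (U * Q)).trace := by
    have e1 : (A * Q)ᴴ * (U * Q) = Qᴴ * (Aᴴ * U) * Q := by
      rw [Matrix.conjTranspose_mul]; simp [Matrix.mul_assoc]
    rw [e1, Matrix.trace_mul_cycle, hQQH, Matrix.one_mul]
  rw [step1, trace_conjTranspose_mul]
  have hAQ : ∀ j, ∑ ρ, (A * Q) ρ j ^ 2 = h.eigenvalues j := by
    intro j
    have e2 : (A * Q)ᴴ * (A * Q) = star Q * (Aᴴ * A) * Q := by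
      rw [Matrix.conjTranspose_mul, Matrix.star_eq_conjTranspose]; simp [Matrix.mul_assoc]
    have : ((A * Q)ᴴ * (A * Q)) j j = Matrix.diagonal h.eigenvalues j j := by
      rw [e2, hdiag]
    simpa [Matrix.mul_apply, Matrix.conjTranspose_apply, Matrix.diagonal_apply_eq, sq,
      mul_comm] using this
  have hUQ : ∀ j, ∑ ρ, (U * Q) ρ j ^ 2 ≤ 1 := by
    intro j
    have h1 := hU (fun c => Q c j)
    have h2 : ∑ c, Q c j ^ 2 = 1 := by
      have : (star Q * Q) j j = (1 : Matrix n n ℝ) j j :=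
        congrFun (congrFun (Matrix.mem_unitaryGroup_iff'.mp h.eigenvectorUnitary.2) j) j
      simpa [Matrix.mul_apply, Matrix.conjTranspose_apply, sq, mul_comm] using this
    calc ∑ ρ, (U * Q) ρ j ^ 2 = ∑ ρ, (∑ c, U ρ c * Q c j) ^ 2 := by
          simp [Matrix.mul_apply]
      _ ≤ ∑ c, Q c j ^ 2 := h1
      _ = 1 := h2
  rw [traceNorm_eq_sum_sqrt]
  apply Finset.sum_le_sum
  intro j _
  have hcs := Finset.sum_mul_sq_le_sq_mul_sq Finset.univ (fun ρ => (A * Q) ρ j) (fun ρ => (U * Q) ρ j)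
  have hnn : (0:ℝ) ≤ ∑ ρ, (A * Q) ρ j ^ 2 := Finset.sum_nonneg fun _ _ => sq_nonneg _
  have hb : (∑ ρ, (A * Q) ρ j * (U * Q) ρ j) ^ 2 ≤ h.eigenvalues j := by
    calc (∑ ρ, (A * Q) ρ j * (U * Q) ρ j) ^ 2
        ≤ (∑ ρ, (A * Q) ρ j ^ 2) * ∑ ρ, (U * Q) ρ j ^ 2 := hcs
      _ ≤ (∑ ρ, (A * Q) ρ j ^ 2) * 1 := mul_le_mul_of_nonneg_left (hUQ j) hnn
      _ = h.eigenvalues j := by rw [mul_one, hAQ j]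
  calc ∑ ρ, (A * Q) ρ j * (U * Q) ρ j
      ≤ |∑ ρ, (A * Q) ρ j * (U * Q) ρ j| := le_abs_self _
    _ = Real.sqrt ((∑ ρ, (A * Q) ρ j * (U * Q) ρ j) ^ 2) := (Real.sqrt_sq_eq_abs _).symm
    _ ≤ Real.sqrt (h.eigenvalues j) := Real.sqrt_le_sqrt hb

/-- Polar-type decomposition: there is a contraction `U` with `trace (Aᴴ U) = ‖A‖_*`. -/
lemma exists_polar {p n : Type*} [Fintype p] [Fintype n] [DecidableEq n]
    (A : Matrix p n ℝ) :
    ∃ U : Matrix p n ℝ,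
      (∀ x : n → ℝ, ∑ ρ, (∑ c, U ρ c * x c) ^ 2 ≤ ∑ c, x c ^ 2) ∧
      (Aᴴ * U).trace = traceNorm A := by
  set h : (Aᴴ * A).IsHermitian := (Matrix.posSemidef_conjTranspose_mul_self A).1 with hdef
  set lam : n → ℝ := h.eigenvalues with hlam
  have hlam0 : ∀ j, 0 ≤ lam j := fun j =>
    (Matrix.posSemidef_conjTranspose_mul_self A).eigenvalues_nonneg j
  set Q : Matrix n n ℝ := (h.eigenvectorUnitary : Matrix n n ℝ) with hQdef
  have hQ2 : Q * Qᴴ = 1 := by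
    rw [← Matrix.star_eq_conjTranspose]; exact Matrix.mem_unitaryGroup_iff.mp h.eigenvectorUnitary.2
  have hQ1 : Qᴴ * Q = 1 := by
    rw [← Matrix.star_eq_conjTranspose]; exact Matrix.mem_unitaryGroup_iff'.mp h.eigenvectorUnitary.2
  have hspec : Aᴴ * A = Q * Matrix.diagonal lam * Qᴴ := by
    have := h.spectral_theorem
    have e : (RCLike.ofReal ∘ h.eigenvalues : n → ℝ) = h.eigenvalues := by ext; simp
    rw [Unitary.conjStarAlgAut_apply, e] at this
    rw [← Matrix.star_eq_conjTranspose]; exact this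
  set d : n → ℝ := fun j => if lam j = 0 then 0 else (Real.sqrt (lam j))⁻¹ with hd
  set N : Matrix n n ℝ := Q * Matrix.diagonal d * Qᴴ with hN
  have hNH : Nᴴ = N := by
    rw [hN, Matrix.conjTranspose_mul, Matrix.conjTranspose_mul,
      Matrix.conjTranspose_conjTranspose, Matrix.diagonal_conjTranspose]
    have : star d = d := by ext j; simp
    rw [this, Matrix.mul_assoc]
  have key : Aᴴ * (A * N) = Q * Matrix.diagonal (fun j => lam j * d j) * Qᴴ := by
    rw [← Matrix.mul_assoc Aᴴ A, hspec, hN, sandwich Q hQ1]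
  refine ⟨A * N, ?_, ?_⟩
  · intro x
    have hUU : (A * N)ᴴ * (A * N) = Q * Matrix.diagonal (fun j => d j * (lam j * d j)) * Qᴴ := by
      rw [Matrix.conjTranspose_mul, Matrix.mul_assoc, key, hNH, hN, sandwich Q hQ1]
    rw [sum_sq_rows, hUU, quad_diag]
    have e_le : ∀ j, d j * (lam j * d j) ≤ 1 := by
      intro j
      by_cases hj : lam j = 0
      · simp [hd, hj]
      · have hpos : 0 < lam j := lt_of_le_of_ne (hlam0 j) (Ne.symm hj)
        have hs : Real.sqrt (lam j) ≠ 0 := ne_of_gt (Real.sqrt_pos.mpr hpos)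
        have : d j * (lam j * d j) = 1 := by
          rw [hd]; simp only [hj, if_false]
          field_simp
          rw [Real.sq_sqrt (hlam0 j)]
        rw [this]
    calc ∑ j, d j * (lam j * d j) * (∑ c, Q c j * x c) ^ 2
        ≤ ∑ j, 1 * (∑ c, Q c j * x c) ^ 2 :=
          Finset.sum_le_sum fun j _ => mul_le_mul_of_nonneg_right (e_le j) (sq_nonneg _)
      _ = ∑ c, x c ^ 2 := by
          have := quad_diag Q (fun _ => (1:ℝ)) x
          rw [Matrix.diagonal_one, Matrix.mul_one, hQ2] at this
          rw [← this]
          simp [Matrix.one_apply, sq, Finset.sum_ite_eq]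
  · rw [key, Matrix.trace_mul_cycle, hQ1, Matrix.one_mul, Matrix.trace_diagonal,
      traceNorm_eq_sum_sqrt]
    rw [show (Matrix.posSemidef_conjTranspose_mul_self A).1.eigenvalues = lam from rfl]
    refine Finset.sum_congr rfl fun j _ => ?_
    by_cases hj : lam j = 0
    · simp [hd, hj]
    · have hpos : 0 < lam j := lt_of_le_of_ne (hlam0 j) (Ne.symm hj)
      have hs : Real.sqrt (lam j) ≠ 0 := ne_of_gt (Real.sqrt_pos.mpr hpos)
      rw [hd]; simp only [hj, if_false]
      field_simp
      rw [Real.sq_sqrt (hlam0 j)]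

section comb
variable {ι κ : Type*}
    {m : ι → Type*} [∀ i, Fintype (m i)]
    {r : κ → ι → Type*} [∀ k i, Fintype (r k i)]

set_option linter.unusedSectionVars false

open Classical in
lemma hsum_aux (f : ∀ k i, r k i → m i) (e : ∀ i, m i → Σ k, r k i)
    (he : ∀ i (x : m i), f (e i x).1 i (e i x).2 = x)
    (i : ι) (k : κ) (j : r k i) (v : m i → ℝ) :
    (if e i (f k i j) = ⟨k, j⟩ then v (f k i j) else 0)
      = ∑ x : m i, if e i x = (⟨k, j⟩ : Σ k', r k' i) then v x else 0 := by
  by_cases hc : e i (f k i j) = ⟨k, j⟩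
  · rw [if_pos hc]
    rw [Finset.sum_eq_single (f k i j)]
    · rw [if_pos hc]
    · intro x _ hx
      rw [if_neg]
      intro hex
      apply hx
      have h1 := he i x
      rw [hex] at h1
      exact h1.symm
    · intro hne; exact absurd (Finset.mem_univ _) hne
  · rw [if_neg hc]
    symm
    apply Finset.sum_eq_zero
    intro x _
    rw [if_neg]
    intro hex
    apply hc
    have h1 := he i x
    rw [hex] at h1
    rw [h1]
    exact hex

open Classical in
lemma hind_aux (e : ∀ i, m i → Σ k, r k i)
    (i : ι) (k : κ) (x' : m i) (t : ℝ) (ht : 0 ≤ t) :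
    ∑ j : r k i, (if e i x' = (⟨k, j⟩ : Σ k', r k' i) then t else 0) ≤ t := by
  rcases hσ : e i x' with ⟨k', j'⟩
  by_cases hk : k' = k
  · subst hk
    have : ∀ j : r k' i, ((⟨k', j'⟩ : Σ k'', r k'' i) = ⟨k', j⟩) ↔ j' = j :=
      fun j => ⟨fun h => sigma_mk_injective (i := k') h, fun h => by rw [h]⟩
    calc ∑ j : r k' i, (if (⟨k', j'⟩ : Σ k'', r k'' i) = ⟨k', j⟩ then t else 0)
        = ∑ j : r k' i, (if j' = j then t else 0) := by
          refine Finset.sum_congr rfl fun j _ => ?_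
          by_cases hj : j' = j
          · rw [if_pos ((this j).mpr hj), if_pos hj]
          · rw [if_neg (fun hc => hj ((this j).mp hc)), if_neg hj]
      _ = t := by rw [Finset.sum_ite_eq]; simp
      _ ≤ t := le_refl t
  · have : ∀ j : r k i, ¬ ((⟨k', j'⟩ : Σ k'', r k'' i) = ⟨k, j⟩) := by
      intro j hc
      exact hk (congrArg Sigma.fst hc)
    calc ∑ j : r k i, (if (⟨k', j'⟩ : Σ k'', r k'' i) = ⟨k, j⟩ then t else 0)
        = 0 := Finset.sum_eq_zero fun j _ => if_neg (this j)
      _ ≤ t := ht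
end comb

/-- Theorem 1 of the paper: if for every view `i` the rows selected by the
label-wise selection maps `f k i` cover all rows of `E i`, then the sum over
labels `k` of the trace norms of the vertical concatenations (over views) of the
selected sub-matrices is at least the trace norm of the vertical concatenation
(over views) of the full matrices. -/
theorem sum_traceNorm_subblocks_ge_traceNorm_vconcat
    {ι κ n : Type*} [Fintype ι] [Fintype κ] [Fintype n] [DecidableEq n]
    {m : ι → Type*} [∀ i, Fintype (m i)]
    {r : κ → ι → Type*} [∀ k i, Fintype (r k i)]
    (E : ∀ i, Matrix (m i) n ℝ)
    (f : ∀ k i, r k i → m i)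
    (hcover : ∀ (i : ι) (x : m i), ∃ (k : κ) (j : r k i), f k i j = x) :
    ∑ k, traceNorm (vconcat fun i => (E i).submatrix (f k i) id) ≥
      traceNorm (vconcat E) := by
  classical
  obtain ⟨U, hUc, hUt⟩ := exists_polar (vconcat E)
  choose K J hKJ using hcover
  set e : ∀ i, m i → Σ k, r k i := fun i x => ⟨K i x, J i x⟩ with he_def
  have he : ∀ i (x : m i), f (e i x).1 i (e i x).2 = x := fun i x => hKJ i x
  let Ut : ∀ k, Matrix (Σ i, r k i) n ℝ := fun k => Matrix.of fun σ c =>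
    if e σ.1 (f k σ.1 σ.2) = ⟨k, σ.2⟩ then U ⟨σ.1, f k σ.1 σ.2⟩ c else 0
  have hUtdef : ∀ k (σ : Σ i, r k i) (c : n), Ut k σ c =
      if e σ.1 (f k σ.1 σ.2) = ⟨k, σ.2⟩ then U ⟨σ.1, f k σ.1 σ.2⟩ c else 0 :=
    fun _ _ _ => rfl
  -- key computation 1 : the sum of the block traces reproduces the full trace
  have lhs_k : ∀ k, ((vconcat fun i => (E i).submatrix (f k i) id)ᴴ * Ut k).trace
      = ∑ i, ∑ j : r k i,
          (if e i (f k i j) = (⟨k, j⟩ : Σ k', r k' i)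
            then ∑ c, vconcat E ⟨i, f k i j⟩ c * U ⟨i, f k i j⟩ c else 0) := by
    intro k
    rw [trace_conjTranspose_mul, Finset.sum_comm, ← Finset.univ_sigma_univ, Finset.sum_sigma]
    refine Finset.sum_congr rfl fun i _ => Finset.sum_congr rfl fun j _ => ?_
    by_cases hc : e i (f k i j) = (⟨k, j⟩ : Σ k', r k' i)
    · rw [if_pos hc]
      refine Finset.sum_congr rfl fun c _ => ?_
      rw [hUtdef k ⟨i, j⟩ c]
      rw [if_pos hc]
      rfl
    · rw [if_neg hc]
      apply Finset.sum_eq_zero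
      intro c _
      rw [hUtdef k ⟨i, j⟩ c, if_neg hc, mul_zero]
  have key1 : ∑ k, ((vconcat fun i => (E i).submatrix (f k i) id)ᴴ * Ut k).trace
      = ((vconcat E)ᴴ * U).trace := by
    rw [trace_conjTranspose_mul (vconcat E) U, Finset.sum_comm,
      ← Finset.univ_sigma_univ, Finset.sum_sigma]
    calc ∑ k, ((vconcat fun i => (E i).submatrix (f k i) id)ᴴ * Ut k).trace
        = ∑ k, ∑ i, ∑ j : r k i,
            (if e i (f k i j) = (⟨k, j⟩ : Σ k', r k' i)
              then ∑ c, vconcat E ⟨i, f k i j⟩ c * U ⟨i, f k i j⟩ c else 0) :=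
          Finset.sum_congr rfl fun k _ => lhs_k k
      _ = ∑ i, ∑ k, ∑ j : r k i,
            (if e i (f k i j) = (⟨k, j⟩ : Σ k', r k' i)
              then ∑ c, vconcat E ⟨i, f k i j⟩ c * U ⟨i, f k i j⟩ c else 0) :=
          Finset.sum_comm
      _ = ∑ i, ∑ k, ∑ j : r k i, ∑ x : m i,
            (if e i x = (⟨k, j⟩ : Σ k', r k' i)
              then ∑ c, vconcat E ⟨i, x⟩ c * U ⟨i, x⟩ c else 0) := by
          refine Finset.sum_congr rfl fun i _ => Finset.sum_congr rfl fun k _ =>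
            Finset.sum_congr rfl fun j _ => ?_
          exact hsum_aux f e he i k j (fun x => ∑ c, vconcat E ⟨i, x⟩ c * U ⟨i, x⟩ c)
      _ = ∑ i, ∑ k, ∑ x : m i, ∑ j : r k i,
            (if e i x = (⟨k, j⟩ : Σ k', r k' i)
              then ∑ c, vconcat E ⟨i, x⟩ c * U ⟨i, x⟩ c else 0) :=
          Finset.sum_congr rfl fun i _ => Finset.sum_congr rfl fun k _ => Finset.sum_comm
      _ = ∑ i, ∑ x : m i, ∑ k, ∑ j : r k i,
            (if e i x = (⟨k, j⟩ : Σ k', r k' i)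
              then ∑ c, vconcat E ⟨i, x⟩ c * U ⟨i, x⟩ c else 0) :=
          Finset.sum_congr rfl fun i _ => Finset.sum_comm
      _ = ∑ i, ∑ x : m i, ∑ c, vconcat E ⟨i, x⟩ c * U ⟨i, x⟩ c := by
          refine Finset.sum_congr rfl fun i _ => Finset.sum_congr rfl fun x _ => ?_
          rw [← Finset.sum_sigma (Finset.univ) (fun k => Finset.univ)
            (fun σ : Σ k, r k i => if e i x = σ
              then ∑ c, vconcat E ⟨i, x⟩ c * U ⟨i, x⟩ c else 0)]
          rw [Finset.univ_sigma_univ, Finset.sum_ite_eq]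
          simp
  -- key computation 2 : each `Ut k` is a contraction
  have key2 : ∀ k (x : n → ℝ),
      ∑ σ : Σ i, r k i, (∑ c, Ut k σ c * x c) ^ 2 ≤ ∑ c, x c ^ 2 := by
    intro k x
    have step : ∀ σ : Σ i, r k i, (∑ c, Ut k σ c * x c) ^ 2
        = (if e σ.1 (f k σ.1 σ.2) = (⟨k, σ.2⟩ : Σ k', r k' σ.1)
            then (∑ c, U ⟨σ.1, f k σ.1 σ.2⟩ c * x c) ^ 2 else 0) := by
      intro σ
      by_cases hc : e σ.1 (f k σ.1 σ.2) = (⟨k, σ.2⟩ : Σ k', r k' σ.1)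
      · rw [if_pos hc]
        congr 1
        exact Finset.sum_congr rfl fun c _ => by rw [hUtdef, if_pos hc]
      · rw [if_neg hc]
        have hz : ∀ c, Ut k σ c * x c = 0 := fun c => by rw [hUtdef, if_neg hc, zero_mul]
        rw [Finset.sum_congr rfl (fun c _ => hz c), Finset.sum_const_zero]
        exact zero_pow two_ne_zero
    calc ∑ σ : Σ i, r k i, (∑ c, Ut k σ c * x c) ^ 2
        = ∑ σ : Σ i, r k i,
            (if e σ.1 (f k σ.1 σ.2) = (⟨k, σ.2⟩ : Σ k', r k' σ.1)
              then (∑ c, U ⟨σ.1, f k σ.1 σ.2⟩ c * x c) ^ 2 else 0) :=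
          Finset.sum_congr rfl fun σ _ => step σ
      _ = ∑ i, ∑ j : r k i,
            (if e i (f k i j) = (⟨k, j⟩ : Σ k', r k' i)
              then (∑ c, U ⟨i, f k i j⟩ c * x c) ^ 2 else 0) := by
          rw [← Finset.univ_sigma_univ, Finset.sum_sigma]
      _ = ∑ i, ∑ j : r k i, ∑ x' : m i,
            (if e i x' = (⟨k, j⟩ : Σ k', r k' i)
              then (∑ c, U ⟨i, x'⟩ c * x c) ^ 2 else 0) := by
          refine Finset.sum_congr rfl fun i _ => Finset.sum_congr rfl fun j _ => ?_
          exact hsum_aux f e he i k j (fun x' => (∑ c, U ⟨i, x'⟩ c * x c) ^ 2)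
      _ = ∑ i, ∑ x' : m i, ∑ j : r k i,
            (if e i x' = (⟨k, j⟩ : Σ k', r k' i)
              then (∑ c, U ⟨i, x'⟩ c * x c) ^ 2 else 0) :=
          Finset.sum_congr rfl fun i _ => Finset.sum_comm
      _ ≤ ∑ i, ∑ x' : m i, (∑ c, U ⟨i, x'⟩ c * x c) ^ 2 :=
          Finset.sum_le_sum fun i _ => Finset.sum_le_sum fun x' _ =>
            hind_aux e i k x' _ (sq_nonneg _)
      _ = ∑ p : Σ i, m i, (∑ c, U p c * x c) ^ 2 := by
          rw [← Finset.univ_sigma_univ, Finset.sum_sigma]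
      _ ≤ ∑ c, x c ^ 2 := hUc x
  -- conclusion
  rw [ge_iff_le]
  calc traceNorm (vconcat E) = ((vconcat E)ᴴ * U).trace := hUt.symm
    _ = ∑ k, ((vconcat fun i => (E i).submatrix (f k i) id)ᴴ * Ut k).trace := key1.symm
    _ ≤ ∑ k, traceNorm (vconcat fun i => (E i).submatrix (f k i) id) :=
        Finset.sum_le_sum fun k _ => trace_mul_le_traceNorm _ _ (key2 k)
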